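/- arXiv:quant-ph/0007044 — 6 statements merged into one kernel-verified Lean document; each statement's English description precedes it below -/
import Mathlib

section
/- If E13, E14, E23, E24 are real numbers each expressible as E_ij = ∫ A_i(λ)B_j(λ) dμ(λ) for a probability measure μ and measurable functions A_i, B_j taking values in {-1, +1}, then |E13 - E14| + |E23 + E24| ≤ 2. -/
open MeasureTheory

theorem bell_chsh
    {Ω : Type*} [MeasurableSpace Ω] (μ : Measure Ω) [IsProbabilityMeasure μ]
    (A₁ A₂ B₃ B₄ : Ω → ℝ)
    (hA₁ : Measurable A₁) (hA₂ : Measurable A₂)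
    (hB₃ : Measurable B₃) (hB₄ : Measurable B₄)
    (hA₁v : ∀ ω, A₁ ω = -1 ∨ A₁ ω = 1) (hA₂v : ∀ ω, A₂ ω = -1 ∨ A₂ ω = 1)
    (hB₃v : ∀ ω, B₃ ω = -1 ∨ B₃ ω = 1) (hB₄v : ∀ ω, B₄ ω = -1 ∨ B₄ ω = 1)
    (E₁₃ E₁₄ E₂₃ E₂₄ : ℝ)
    (h₁₃ : E₁₃ = ∫ ω, A₁ ω * B₃ ω ∂μ) (h₁₄ : E₁₄ = ∫ ω, A₁ ω * B₄ ω ∂μ)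
    (h₂₃ : E₂₃ = ∫ ω, A₂ ω * B₃ ω ∂μ) (h₂₄ : E₂₄ = ∫ ω, A₂ ω * B₄ ω ∂μ) :
    |E₁₃ - E₁₄| + |E₂₃ + E₂₄| ≤ 2 := by
  have int : ∀ (f g : Ω → ℝ), Measurable f → Measurable g →
      (∀ ω, f ω = -1 ∨ f ω = 1) → (∀ ω, g ω = -1 ∨ g ω = 1) →
      Integrable (fun ω => f ω * g ω) μ := by
    intro f g hf hg hfv hgv
    refine (integrable_const (1 : ℝ)).mono' ((hf.mul hg).aestronglyMeasurable)
      (Filter.Eventually.of_forall fun ω => ?_)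
    rcases hfv ω with h1 | h1 <;> rcases hgv ω with h2 | h2 <;> simp [h1, h2]
  have i13 := int _ _ hA₁ hB₃ hA₁v hB₃v
  have i14 := int _ _ hA₁ hB₄ hA₁v hB₄v
  have i23 := int _ _ hA₂ hB₃ hA₂v hB₃v
  have i24 := int _ _ hA₂ hB₄ hA₂v hB₄v
  have key : ∀ ω, |A₁ ω * B₃ ω - A₁ ω * B₄ ω| + |A₂ ω * B₃ ω + A₂ ω * B₄ ω| = 2 := by
    intro ω
    rcases hA₁v ω with h1 | h1 <;> rcases hA₂v ω with h2 | h2 <;>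
      rcases hB₃v ω with h3 | h3 <;> rcases hB₄v ω with h4 | h4 <;>
      simp [h1, h2, h3, h4] <;> norm_num
  have h1 : |E₁₃ - E₁₄| ≤ ∫ ω, |A₁ ω * B₃ ω - A₁ ω * B₄ ω| ∂μ := by
    rw [h₁₃, h₁₄, ← integral_sub i13 i14]
    simpa [Real.norm_eq_abs] using norm_integral_le_integral_norm (μ := μ) (fun ω => A₁ ω * B₃ ω - A₁ ω * B₄ ω)
  have h2 : |E₂₃ + E₂₄| ≤ ∫ ω, |A₂ ω * B₃ ω + A₂ ω * B₄ ω| ∂μ := by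
    rw [h₂₃, h₂₄, ← integral_add i23 i24]
    simpa [Real.norm_eq_abs] using norm_integral_le_integral_norm (μ := μ) (fun ω => A₂ ω * B₃ ω + A₂ ω * B₄ ω)
  have iabs1 : Integrable (fun ω => |A₁ ω * B₃ ω - A₁ ω * B₄ ω|) μ := (i13.sub i14).abs
  have iabs2 : Integrable (fun ω => |A₂ ω * B₃ ω + A₂ ω * B₄ ω|) μ := (i23.add i24).abs
  calc |E₁₃ - E₁₄| + |E₂₃ + E₂₄|
      ≤ (∫ ω, |A₁ ω * B₃ ω - A₁ ω * B₄ ω| ∂μ) + ∫ ω, |A₂ ω * B₃ ω + A₂ ω * B₄ ω| ∂μ :=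
        add_le_add h1 h2
    _ = ∫ ω, (|A₁ ω * B₃ ω - A₁ ω * B₄ ω| + |A₂ ω * B₃ ω + A₂ ω * B₄ ω|) ∂μ :=
        (integral_add iabs1 iabs2).symm
    _ = ∫ _ω, (2 : ℝ) ∂μ := by simp only [key]
    _ = 2 := by simp
end

section
/- For any probability space (X, 𝓜, μ) and events A1, A2, A3, A4 ∈ 𝓜, setting p_i = μ(A_i) and p_ij = μ(A_i ∩ A_j), the Clauser–Horne inequality -1 ≤ p14 - p13 + p23 + p24 - p2 - p4 ≤ 0 holds. -/
open MeasureTheory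

/-!
Writing `a, b, c, d` for the indicators of `A₁, A₂, A₃, A₄` at a point, the integrand
`a d - a c + b c + b d - b - d` of the Clauser–Horne combination is the bilinear interpolation in
`(a, b)` of the four values `-d, -c, c - 1, d - 1`, all of which lie in `[-1, 0]`. Hence the
integrand lies in `[-1, 0]` pointwise, and so does its integral against a probability measure.
-/

open Set

theorem clauserHorne_mem_Icc {a b c d : ℝ} (ha : a ∈ Icc (0 : ℝ) 1) (hb : b ∈ Icc (0 : ℝ) 1)
    (hc : c ∈ Icc (0 : ℝ) 1) (hd : d ∈ Icc (0 : ℝ) 1) :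
    a * d - a * c + b * c + b * d - b - d ∈ Icc (-1) 0 := by
  obtain ⟨ha₀, ha₁⟩ := ha
  obtain ⟨hb₀, hb₁⟩ := hb
  obtain ⟨hc₀, hc₁⟩ := hc
  obtain ⟨hd₀, hd₁⟩ := hd
  have interpolation : a * d - a * c + b * c + b * d - b - d =
      (1 - a) * (1 - b) * (-d) + a * (1 - b) * (-c) + (1 - a) * b * (c - 1) + a * b * (d - 1) := by
    ring
  have w₀₀ : 0 ≤ (1 - a) * (1 - b) := mul_nonneg (by linarith) (by linarith)
  have w₁₀ : 0 ≤ a * (1 - b) := mul_nonneg ha₀ (by linarith)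
  have w₀₁ : 0 ≤ (1 - a) * b := mul_nonneg (by linarith) hb₀
  have w₁₁ : 0 ≤ a * b := mul_nonneg ha₀ hb₀
  rw [interpolation]
  constructor
  · nlinarith [mul_nonneg w₀₀ (sub_nonneg.2 hd₁), mul_nonneg w₁₀ (sub_nonneg.2 hc₁),
      mul_nonneg w₀₁ hc₀, mul_nonneg w₁₁ hd₀]
  · nlinarith [mul_nonneg w₀₀ hd₀, mul_nonneg w₁₀ hc₀,
      mul_nonneg w₀₁ (sub_nonneg.2 hc₁), mul_nonneg w₁₁ (sub_nonneg.2 hd₁)]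

theorem indicator_one_mem_Icc {X : Type*} (s : Set X) (x : X) :
    s.indicator (1 : X → ℝ) x ∈ Icc 0 1 := by
  by_cases hx : x ∈ s <;> simp [hx]

theorem integral_mem_Icc_of_ae_mem_Icc {X : Type*} [MeasurableSpace X] {μ : Measure X}
    [IsProbabilityMeasure μ] {f : X → ℝ} (hf : Integrable f μ) {a b : ℝ}
    (h : ∀ᵐ x ∂μ, f x ∈ Icc a b) : ∫ x, f x ∂μ ∈ Icc a b := by
  constructor
  · simpa using integral_mono_ae (integrable_const a) hf (h.mono fun x hx => hx.1)
  · simpa using integral_mono_ae hf (integrable_const b) (h.mono fun x hx => hx.2)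

theorem clauser_horne
    {X : Type*} [MeasurableSpace X] (μ : Measure X) [IsProbabilityMeasure μ]
    (A₁ A₂ A₃ A₄ : Set X)
    (h₁ : MeasurableSet A₁) (h₂ : MeasurableSet A₂)
    (h₃ : MeasurableSet A₃) (h₄ : MeasurableSet A₄) :
    -1 ≤ (μ (A₁ ∩ A₄)).toReal - (μ (A₁ ∩ A₃)).toReal + (μ (A₂ ∩ A₃)).toReal
        + (μ (A₂ ∩ A₄)).toReal - (μ A₂).toReal - (μ A₄).toReal ∧
    (μ (A₁ ∩ A₄)).toReal - (μ (A₁ ∩ A₃)).toReal + (μ (A₂ ∩ A₃)).toReal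
        + (μ (A₂ ∩ A₄)).toReal - (μ A₂).toReal - (μ A₄).toReal ≤ 0 := by
  set F : X → ℝ := fun x => (A₁ ∩ A₄).indicator 1 x - (A₁ ∩ A₃).indicator 1 x
    + (A₂ ∩ A₃).indicator 1 x + (A₂ ∩ A₄).indicator 1 x - A₂.indicator 1 x - A₄.indicator 1 x
  have hF_mem : ∀ x, F x ∈ Icc (-1) 0 := fun x => by
    simpa only [F, inter_indicator_one, Pi.mul_apply] using
      clauserHorne_mem_Icc (indicator_one_mem_Icc A₁ x) (indicator_one_mem_Icc A₂ x)
        (indicator_one_mem_Icc A₃ x) (indicator_one_mem_Icc A₄ x)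
  have h_ind : ∀ {s : Set X}, MeasurableSet s → Integrable (s.indicator (1 : X → ℝ)) μ :=
    fun hs => (integrable_const 1).indicator hs
  have hF_integral : ∫ x, F x ∂μ = (μ (A₁ ∩ A₄)).toReal - (μ (A₁ ∩ A₃)).toReal
      + (μ (A₂ ∩ A₃)).toReal + (μ (A₂ ∩ A₄)).toReal - (μ A₂).toReal - (μ A₄).toReal := by
    rw [integral_sub, integral_sub, integral_add, integral_add, integral_sub]
    all_goals first
      | simp only [integral_indicator_one, h₁.inter h₄, h₁.inter h₃, h₂.inter h₃, h₂.inter h₄,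
          h₂, h₄, measureReal_def]
      | fun_prop (disch := measurability)
  rw [← hF_integral]
  exact integral_mem_Icc_of_ae_mem_Icc (by fun_prop (disch := measurability)) (ae_of_all μ hF_mem)
end

section
/- The probability vector p1 = p2 = p3 = p4 = 1, p13 = 0, p14 = p23 = p24 = 1 violates the Clauser–Horne inequality: p14 - p13 + p23 + p24 - p2 - p4 = 1 > 0. Consequently there is no probability space (X, 𝓜, μ) with events A1, A2, A3, A4 satisfying μ(A_i) = p_i and μ(A_i ∩ A_j) = p_ij for these values. -/
open MeasureTheory

theorem vessels_violate_clauser_horne :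
    ((1 : ℝ) - 0 + 1 + 1 - 1 - 1 = 1 ∧ (1 : ℝ) > 0) ∧
    ¬ ∃ (X : Type) (_ : MeasurableSpace X) (μ : Measure X),
        IsProbabilityMeasure μ ∧
        ∃ A₁ A₂ A₃ A₄ : Set X,
          MeasurableSet A₁ ∧ MeasurableSet A₂ ∧ MeasurableSet A₃ ∧ MeasurableSet A₄ ∧
          (μ A₁).toReal = 1 ∧ (μ A₂).toReal = 1 ∧ (μ A₃).toReal = 1 ∧ (μ A₄).toReal = 1 ∧
          (μ (A₁ ∩ A₃)).toReal = 0 ∧ (μ (A₁ ∩ A₄)).toReal = 1 ∧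
          (μ (A₂ ∩ A₃)).toReal = 1 ∧ (μ (A₂ ∩ A₄)).toReal = 1 := by
  refine ⟨⟨by norm_num, by norm_num⟩, ?_⟩
  rintro ⟨X, m, μ, hprob, A₁, A₂, A₃, A₄, mA₁, mA₂, mA₃, mA₄,
    h1, h2, h3, h4, h13, h14, h23, h24⟩
  have hA1 : μ A₁ = 1 := by
    have := ENNReal.toReal_eq_one_iff (μ A₁)
    exact this.mp h1
  have hA3 : μ A₃ = 1 := (ENNReal.toReal_eq_one_iff (μ A₃)).mp h3
  have hfin : μ (A₁ ∩ A₃) ≠ ⊤ := (measure_lt_top μ _).ne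
  have h130 : μ (A₁ ∩ A₃) = 0 := by
    have := ENNReal.toReal_eq_zero_iff (μ (A₁ ∩ A₃))
    rcases this.mp h13 with h | h
    · exact h
    · exact absurd h hfin
  have key : μ (A₁ ∪ A₃) + μ (A₁ ∩ A₃) = μ A₁ + μ A₃ :=
    measure_union_add_inter A₁ mA₃
  rw [h130, hA1, hA3, add_zero] at key
  have hle : μ (A₁ ∪ A₃) ≤ 1 := prob_le_one
  rw [key] at hle
  norm_num at hle
end

section
/- (Pitowsky, easy direction) If there exists a probability space (X, 𝓜, μ) and events A1, ..., An ∈ 𝓜 with p_i = μ(A_i) for 1 ≤ i ≤ n and p_ij = μ(A_i ∩ A_j) for {i,j} ∈ S, then the vector p = (p_1,...,p_n, (p_ij)_{{i,j}∈S}) lies in the classical correlation polytope C(n,S), i.e., in the convex hull of the vectors u^ε for ε ∈ {0,1}^n defined by u^ε_j = ε_j and u^ε_{ij} = ε_i ε_j. -/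
open MeasureTheory

/-- The vertex `u^ε` of the correlation polytope `C(n,S)`, as an element of
`R(n,S) = (Fin n ⊕ S) → ℝ`: `u^ε_j = ε_j` and `u^ε_{ij} = ε_i ε_j`. -/
def pitowskyVertex {n : ℕ} (S : Finset (Fin n × Fin n)) (ε : Fin n → Bool) :
    (Fin n ⊕ {s // s ∈ S}) → ℝ :=
  Sum.elim (fun j => if ε j then 1 else 0)
    (fun s => (if ε s.1.1 then 1 else 0) * (if ε s.1.2 then 1 else 0))

theorem pitowsky_easy_direction
    {n : ℕ} (S : Finset (Fin n × Fin n)) (hS : ∀ s ∈ S, s.1 < s.2)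
    {X : Type*} [MeasurableSpace X] (μ : Measure X) [IsProbabilityMeasure μ]
    (A : Fin n → Set X) (hA : ∀ i, MeasurableSet (A i))
    (p : (Fin n ⊕ {s // s ∈ S}) → ℝ)
    (hp₁ : ∀ i : Fin n, p (Sum.inl i) = (μ (A i)).toReal)
    (hp₂ : ∀ s : {s // s ∈ S}, p (Sum.inr s) = (μ (A s.1.1 ∩ A s.1.2)).toReal) :
    p ∈ convexHull ℝ (Set.range (pitowskyVertex S)) := by
  classical
  set B : (Fin n → Bool) → Set X := fun ε => ⋂ i, (if ε i then A i else (A i)ᶜ) with hB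
  have hBmeas : ∀ ε, MeasurableSet (B ε) := by
    intro ε
    refine MeasurableSet.iInter fun i => ?_
    by_cases h : ε i <;> simp [h, hA i, (hA i).compl]
  have hsubT : ∀ ε (i : Fin n), ε i = true → B ε ⊆ A i := by
    intro ε i h x hx
    have := Set.mem_iInter.mp hx i
    simpa [h] using this
  have hsubF : ∀ ε (i : Fin n), ε i = false → B ε ⊆ (A i)ᶜ := by
    intro ε i h x hx
    have := Set.mem_iInter.mp hx i
    simpa [h] using this
  have hdisj : Pairwise (Function.onFun Disjoint B) := by
    intro ε ε' hne
    obtain ⟨i, hi⟩ := Function.ne_iff.mp hne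
    refine Set.disjoint_left.mpr fun x hx hx' => ?_
    cases h1 : ε i <;> cases h2 : ε' i
    · exact absurd rfl (by rw [h1, h2] at hi; exact hi)
    · exact hsubF ε i h1 hx (hsubT ε' i h2 hx')
    · exact hsubF ε' i h2 hx' (hsubT ε i h1 hx)
    · exact absurd rfl (by rw [h1, h2] at hi; exact hi)
  have hcover : (⋃ ε, B ε) = Set.univ := by
    ext x
    simp only [Set.mem_univ, iff_true, Set.mem_iUnion]
    refine ⟨fun i => decide (x ∈ A i), Set.mem_iInter.mpr fun i => ?_⟩
    by_cases h : x ∈ A i <;> simp [h]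
  have key : ∀ T : Set X, MeasurableSet T → μ T = ∑ ε : Fin n → Bool, μ (T ∩ B ε) := by
    intro T hT
    have hT' : T = ⋃ ε, T ∩ B ε := by
      rw [← Set.inter_iUnion, hcover, Set.inter_univ]
    nth_rewrite 1 [hT']
    rw [measure_iUnion
      (hdisj.mono fun a b h => h.mono Set.inter_subset_right Set.inter_subset_right)
      (fun ε => hT.inter (hBmeas ε)), tsum_fintype]
  set w : (Fin n → Bool) → ℝ := fun ε => (μ (B ε)).toReal with hw
  have hw0 : ∀ ε, 0 ≤ w ε := fun ε => ENNReal.toReal_nonneg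
  have hwsum : ∑ ε : Fin n → Bool, w ε = 1 := by
    have h := key Set.univ MeasurableSet.univ
    simp only [Set.univ_inter, measure_univ] at h
    have : ((1 : ENNReal)).toReal = (∑ ε : Fin n → Bool, μ (B ε)).toReal := by rw [← h]
    rw [ENNReal.toReal_sum (fun ε _ => measure_ne_top μ _)] at this
    simpa using this.symm
  have hAB : ∀ (T : Set X), MeasurableSet T → ∀ (c : (Fin n → Bool) → Bool),
      (∀ ε, T ∩ B ε = if c ε then B ε else ∅) →
      (μ T).toReal = ∑ ε : Fin n → Bool, w ε * (if c ε then 1 else 0) := by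
    intro T hT c hc
    rw [key T hT, ENNReal.toReal_sum (fun ε _ => measure_ne_top μ _)]
    refine Finset.sum_congr rfl fun ε _ => ?_
    rw [hc ε]
    by_cases h : c ε <;> simp [h, hw]
  have hpeq : p = ∑ ε : Fin n → Bool, w ε • pitowskyVertex S ε := by
    funext x
    rw [Finset.sum_apply]
    cases x with
    | inl i =>
      rw [hp₁ i, hAB (A i) (hA i) (fun ε => ε i) ?_]
      · exact Finset.sum_congr rfl fun ε _ => by simp [pitowskyVertex]
      · intro ε
        cases h : ε i
        · simp only [h, Bool.false_eq_true, if_false]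
          exact Set.eq_empty_iff_forall_notMem.mpr fun x hx =>
            hsubF ε i h hx.2 hx.1
        · simp only [h, if_true]
          exact Set.inter_eq_self_of_subset_right (hsubT ε i h)
    | inr s =>
      rw [hp₂ s, hAB (A s.1.1 ∩ A s.1.2) ((hA _).inter (hA _)) (fun ε => ε s.1.1 && ε s.1.2) ?_]
      · refine Finset.sum_congr rfl fun ε _ => ?_
        cases h1 : ε s.1.1 <;> cases h2 : ε s.1.2 <;> simp [pitowskyVertex, h1, h2]
      · intro ε
        cases h1 : ε s.1.1 <;> cases h2 : ε s.1.2 <;>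
          simp only [h1, h2, Bool.and_self, Bool.false_and, Bool.and_false, Bool.true_and,
            Bool.false_eq_true, if_false, if_true]
        · exact Set.eq_empty_iff_forall_notMem.mpr fun x hx =>
            hsubF ε s.1.1 h1 hx.2 hx.1.1
        · exact Set.eq_empty_iff_forall_notMem.mpr fun x hx =>
            hsubF ε s.1.1 h1 hx.2 hx.1.1
        · exact Set.eq_empty_iff_forall_notMem.mpr fun x hx =>
            hsubF ε s.1.2 h2 hx.2 hx.1.2
        · rw [Set.inter_assoc,
            Set.inter_eq_self_of_subset_right (hsubT ε s.1.2 h2)]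
          exact Set.inter_eq_self_of_subset_right (hsubT ε s.1.1 h1)
  rw [hpeq]
  exact (convex_convexHull ℝ _).sum_mem (fun ε _ => hw0 ε) hwsum
    (fun ε _ => subset_convexHull ℝ _ (Set.mem_range_self ε))
end

section
/- (Pitowsky, hard direction) If the vector p ∈ R(n,S) lies in the classical correlation polytope C(n,S), then there exists a probability space (X, 𝓜, μ) and events A1, ..., An ∈ 𝓜 such that p_i = μ(A_i) for all 1 ≤ i ≤ n and p_ij = μ(A_i ∩ A_j) for all {i,j} ∈ S. -/
open MeasureTheory

lemma pitowsky_aux {ι : Type} [Fintype ι] (w : ι → ℝ) (hw₀ : ∀ i, 0 ≤ w i)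
    (B : Set ι) :
    ((∑ k : ι, ENNReal.ofReal (w k) • (@Measure.dirac ι ⊤ k)) B).toReal
      = ∑ k : ι, w k * B.indicator (fun _ => (1 : ℝ)) k := by
  classical
  have hB : MeasurableSet[⊤] B := trivial
  rw [Measure.finset_sum_apply]
  rw [ENNReal.toReal_sum]
  · refine Finset.sum_congr rfl fun k _ => ?_
    rw [Measure.smul_apply, @Measure.dirac_apply' ι ⊤ B k hB]
    simp only [smul_eq_mul, Set.indicator]
    split
    · simp [ENNReal.toReal_ofReal (hw₀ k)]
    · simp
  · intro k _
    rw [Measure.smul_apply, @Measure.dirac_apply' ι ⊤ B k hB]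
    simp only [smul_eq_mul, Set.indicator]
    split <;> simp [ENNReal.mul_ne_top, ENNReal.ofReal_ne_top]

theorem pitowsky_hard_direction
    {n : ℕ} (S : Finset (Fin n × Fin n)) (hS : ∀ s ∈ S, s.1 < s.2)
    (p : (Fin n ⊕ {s // s ∈ S}) → ℝ)
    (hp : p ∈ convexHull ℝ (Set.range (pitowskyVertex S))) :
    ∃ (X : Type) (_ : MeasurableSpace X) (μ : Measure X),
      IsProbabilityMeasure μ ∧
      ∃ A : Fin n → Set X,
        (∀ i, MeasurableSet (A i)) ∧
        (∀ i : Fin n, (μ (A i)).toReal = p (Sum.inl i)) ∧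
        (∀ s : {s // s ∈ S}, (μ (A s.1.1 ∩ A s.1.2)).toReal = p (Sum.inr s)) := by
  rw [mem_convexHull_iff_exists_fintype] at hp
  obtain ⟨ι, _, w, z, hw₀, hw₁, hz, hx⟩ := hp
  choose ε hε using fun k => hz k
  refine ⟨ι, ⊤, ∑ k : ι, ENNReal.ofReal (w k) • (@Measure.dirac ι ⊤ k), ?_, ?_⟩
  · constructor
    have h := pitowsky_aux w hw₀ (Set.univ : Set ι)
    simp only [Set.indicator_univ, mul_one] at h
    rw [hw₁] at h
    rw [← ENNReal.toReal_eq_one_iff]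
    exact h
  · refine ⟨fun i => {k | ε k i = true}, fun i => trivial, ?_, ?_⟩
    · intro i
      rw [pitowsky_aux w hw₀]
      have h := congrFun hx (Sum.inl i)
      simp only [Finset.sum_apply, Pi.smul_apply, smul_eq_mul] at h
      rw [← h]
      refine Finset.sum_congr rfl fun k _ => ?_
      rw [← hε k]
      by_cases hb : ε k i = true <;>
        simp [pitowskyVertex, Set.indicator, hb]
    · intro s
      rw [pitowsky_aux w hw₀]
      have h := congrFun hx (Sum.inr s)
      simp only [Finset.sum_apply, Pi.smul_apply, smul_eq_mul] at h
      rw [← h]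
      refine Finset.sum_congr rfl fun k _ => ?_
      rw [← hε k]
      by_cases h1 : ε k s.1.1 = true <;> by_cases h2 : ε k s.1.2 = true <;>
        simp [pitowskyVertex, Set.indicator, h1, h2]
end

section
/- In the parameterized sphere model with the optimal coplanar CHSH angles (so that the relevant inner products are ±√2/2), the CHSH expression equals 2√2·ρ/ε when ε/ρ > √2/2, and equals 4 when ε/ρ ≤ √2/2 (with ρ > 0). -/
/-- The coincidence expectation value of the parameterized sphere model, as a
function of the inner product `t = a·b` of the chosen measurement directions. -/
noncomputable def sphereModelE (ρ ε t : ℝ) : ℝ :=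
  if ρ * t ≥ ε then -1 else if ρ * t ≤ -ε then 1 else -(ρ * t) / ε

theorem sphere_model_chsh_value
    (ρ ε : ℝ) (hρ : 0 < ρ ∧ ρ ≤ 1) (hε : 0 < ε ∧ ε ≤ 1) :
    (ε / ρ > Real.sqrt 2 / 2 →
      |sphereModelE ρ ε (Real.sqrt 2 / 2) - sphereModelE ρ ε (-(Real.sqrt 2 / 2))|
        + |sphereModelE ρ ε (Real.sqrt 2 / 2) + sphereModelE ρ ε (Real.sqrt 2 / 2)|
        = 2 * Real.sqrt 2 * ρ / ε) ∧
    (ε / ρ ≤ Real.sqrt 2 / 2 →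
      |sphereModelE ρ ε (Real.sqrt 2 / 2) - sphereModelE ρ ε (-(Real.sqrt 2 / 2))|
        + |sphereModelE ρ ε (Real.sqrt 2 / 2) + sphereModelE ρ ε (Real.sqrt 2 / 2)|
        = 4) := by
  obtain ⟨hρ0, hρ1⟩ := hρ
  obtain ⟨hε0, hε1⟩ := hε
  have hs : (0:ℝ) < Real.sqrt 2 / 2 := by positivity
  have hps : 0 < ρ * (Real.sqrt 2 / 2) := by positivity
  constructor
  · intro h
    have h1 : ρ * (Real.sqrt 2 / 2) < ε := by
      have := (lt_div_iff₀ hρ0).mp h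
      linarith [this]
    have h2 : ¬ (ρ * (Real.sqrt 2 / 2) ≥ ε) := by linarith
    have h3 : ¬ (ρ * (Real.sqrt 2 / 2) ≤ -ε) := by nlinarith
    have h4 : ρ * (-(Real.sqrt 2 / 2)) = -(ρ * (Real.sqrt 2 / 2)) := by ring
    have h5 : ¬ (ρ * (-(Real.sqrt 2 / 2)) ≥ ε) := by rw [h4]; nlinarith
    have h6 : ¬ (ρ * (-(Real.sqrt 2 / 2)) ≤ -ε) := by rw [h4]; linarith
    simp only [sphereModelE, if_neg h2, if_neg h3, if_neg h5, if_neg h6]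
    have e1 : -(ρ * (Real.sqrt 2 / 2)) / ε - -(ρ * -(Real.sqrt 2 / 2)) / ε
        = -(2 * (ρ * (Real.sqrt 2 / 2)) / ε) := by ring
    have e2 : -(ρ * (Real.sqrt 2 / 2)) / ε + -(ρ * (Real.sqrt 2 / 2)) / ε
        = -(2 * (ρ * (Real.sqrt 2 / 2)) / ε) := by ring
    rw [e1, e2, abs_neg, abs_of_nonneg (by positivity)]
    ring
  · intro h
    have h1 : ε ≤ ρ * (Real.sqrt 2 / 2) := by
      have := (div_le_iff₀ hρ0).mp h
      linarith [this]
    have h2 : ρ * (Real.sqrt 2 / 2) ≥ ε := h1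
    have h4 : ρ * (-(Real.sqrt 2 / 2)) = -(ρ * (Real.sqrt 2 / 2)) := by ring
    have h5 : ¬ (ρ * (-(Real.sqrt 2 / 2)) ≥ ε) := by rw [h4]; linarith
    have h6 : ρ * (-(Real.sqrt 2 / 2)) ≤ -ε := by rw [h4]; linarith
    simp only [sphereModelE, if_pos h2, if_neg h5, if_pos h6]
    norm_num
end
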